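/- arXiv:math/0609655 — 2 statements merged into one kernel-verified Lean document; each statement's English description precedes it below -/
import Mathlib

section
/- Let I be a fine normal ideal on κ such that E^κ_ω ∉ I. Then nonempty does not have a winning strategy in the ideal game on I. -/
open Set

noncomputable section

namespace BMPDGames

/-- `I` is an ideal on the (regular uncountable) ordinal `κ`:  a collection of subsets of
`κ` containing all singletons, closed under subsets and finite unions, with `κ ∉ I`. -/
def IsIdealOn (κ : Ordinal) (I : Set (Set Ordinal)) : Prop :=
  (∀ A ∈ I, A ⊆ Set.Iio κ) ∧
  (∀ β < κ, ({β} : Set Ordinal) ∈ I) ∧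
  (∀ A B : Set Ordinal, A ⊆ B → B ∈ I → A ∈ I) ∧
  (∀ A ∈ I, ∀ B ∈ I, A ∪ B ∈ I) ∧
  Set.Iio κ ∉ I

/-- `I` is fine: every bounded subset of `κ` belongs to `I`. -/
def IsFineIdeal (κ : Ordinal) (I : Set (Set Ordinal)) : Prop :=
  ∀ A : Set Ordinal, A ⊆ Set.Iio κ → (∃ β < κ, A ⊆ Set.Iio β) → A ∈ I

/-- `I` is normal: the diagonal union of `κ` many members of `I` belongs to `I`. -/
def IsNormalIdeal (κ : Ordinal) (I : Set (Set Ordinal)) : Prop :=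
  ∀ A : Ordinal → Set Ordinal, (∀ γ, γ < κ → A γ ∈ I) →
    {β : Ordinal | β < κ ∧ ∃ γ < β, β ∈ A γ} ∈ I

/-- `I` is a fine normal ideal on `κ`. -/
def FineNormalIdeal (κ : Ordinal) (I : Set (Set Ordinal)) : Prop :=
  IsIdealOn κ I ∧ IsFineIdeal κ I ∧ IsNormalIdeal κ I

/-- `κ` is (as an ordinal) a regular uncountable cardinal. -/
def RegUncountable (κ : Ordinal) : Prop :=
  κ.card.IsRegular ∧ Cardinal.aleph0 < κ.card ∧ κ.card.ord = κ

/-- `C` is a club (closed unbounded) subset of `κ`: it is closed under suprema of its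
bounded nonempty subsets and unbounded in `κ`. -/
def IsClubIn (κ : Ordinal) (C : Set Ordinal) : Prop :=
  C ⊆ Set.Iio κ ∧
  (∀ D : Set Ordinal, D ⊆ C → D.Nonempty → sSup D < κ → sSup D ∈ C) ∧
  (∀ β, β < κ → ∃ γ ∈ C, β < γ)

/-- `S` is a stationary subset of `κ`: it meets every club. -/
def IsStationaryIn (κ : Ordinal) (S : Set Ordinal) : Prop :=
  S ⊆ Set.Iio κ ∧ ∀ C : Set Ordinal, IsClubIn κ C → (S ∩ C).Nonempty

/-- The nonstationary ideal on `κ`: subsets of `κ` disjoint from some club. -/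
def NSIdeal (κ : Ordinal) : Set (Set Ordinal) :=
  {A | A ⊆ Set.Iio κ ∧ ∃ C : Set Ordinal, IsClubIn κ C ∧ A ∩ C = ∅}

/-- `E^κ_ω`, the set of ordinals below `κ` of cofinality `ω`. -/
def Ecofomega (κ : Ordinal) : Set Ordinal :=
  {α : Ordinal | α < κ ∧ Ordinal.cof α = Cardinal.aleph0}

/-- The intersection of the values `T β` for `β < α`. -/
def InterBelow (T : Ordinal → Set Ordinal) (α : Ordinal) : Set Ordinal :=
  ⋂ β ∈ Set.Iio α, T β

/-! ### The Banach–Mazur game `BM_{<ζ}(I,S)` (empty moves first at every stage).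

A strategy for a player is represented as a function giving that player's move at stage `α`
as a function of the opponent's moves (it may only depend on the moves made before the
player's move at stage `α`, which is the first conjunct in each definition below).  A
strategy is winning if it always produces legal moves (as long as the opponent has played
legally and the game is not yet over) and every run in which the opponent plays legally is
won by the player. -/

/-- `σ` is a winning strategy for the player *empty* in `BM_{<ζ}(I,S)`.
Here `T : Ordinal → Set Ordinal` ranges over the sequences of moves of nonempty, and
empty's move at stage `α` is `σ α T`. Empty wins a run iff at some stage `α < ζ`
the intersection of all moves made before stage `α` belongs to `I`. -/
def EmptyBMStratWins (ζ : Ordinal) (I : Set (Set Ordinal)) (S : Set Ordinal)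
    (σ : Ordinal → (Ordinal → Set Ordinal) → Set Ordinal) : Prop :=
  (∀ (α : Ordinal) (T T' : Ordinal → Set Ordinal),
      (∀ β < α, T β = T' β) → σ α T = σ α T') ∧
  ∀ T : Ordinal → Set Ordinal,
    (∀ α < ζ, (∀ β < α, T β ∉ I ∧ T β ⊆ σ β T) → InterBelow T α ∉ I →
      σ α T ∉ I ∧ σ α T ⊆ S ∧ ∀ β < α, σ α T ⊆ T β) ∧
    ((∀ α < ζ, T α ∉ I ∧ T α ⊆ σ α T) → ∃ α < ζ, InterBelow T α ∈ I)

/-- Empty has a winning strategy in `BM_{<ζ}(I,S)`. -/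
def EmptyWinsBM (ζ : Ordinal) (I : Set (Set Ordinal)) (S : Set Ordinal) : Prop :=
  ∃ σ, EmptyBMStratWins ζ I S σ

/-- Nonempty has a winning strategy in `BM_{<ζ}(I,S)`.
Here `Sq : Ordinal → Set Ordinal` ranges over the sequences of moves of empty, and
nonempty's move at stage `α` is `τ α Sq`.  The strategy must respond legally to legal
play by empty, and guarantee that empty is never stuck, i.e. that the intersection of
all previous moves never lies in `I` at any stage `α < ζ`. -/
def NonemptyWinsBM (ζ : Ordinal) (I : Set (Set Ordinal)) (S : Set Ordinal) : Prop :=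
  ∃ τ : Ordinal → (Ordinal → Set Ordinal) → Set Ordinal,
    (∀ (α : Ordinal) (Sq Sq' : Ordinal → Set Ordinal),
        (∀ β ≤ α, Sq β = Sq' β) → τ α Sq = τ α Sq') ∧
    ∀ Sq : Ordinal → Set Ordinal, ∀ α, α < ζ →
      ((∀ β ≤ α, Sq β ∉ I ∧ Sq β ⊆ S ∧ ∀ γ < β, Sq β ⊆ Sq γ ∩ τ γ Sq) →
        τ α Sq ∉ I ∧ τ α Sq ⊆ Sq α) ∧
      ((∀ β < α, Sq β ∉ I ∧ Sq β ⊆ S ∧ ∀ γ < β, Sq β ⊆ Sq γ ∩ τ γ Sq) →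
        InterBelow (fun β => Sq β ∩ τ β Sq) α ∉ I)

/-! ### The variant `BM'_{<ζ}(I,S)` in which nonempty makes the first move at stage `0`
(playing an `I`-positive `T 0 ⊆ S`), after which play continues as in `BM` with empty
moving first at every later stage. -/

/-- `σ` is a winning strategy for empty in `BM'_{<ζ}(I,S)` (`σ` is only used at
stages `α > 0`, since nonempty alone moves at stage `0`). -/
def EmptyBMPrimeStratWins (ζ : Ordinal) (I : Set (Set Ordinal)) (S : Set Ordinal)
    (σ : Ordinal → (Ordinal → Set Ordinal) → Set Ordinal) : Prop :=
  (∀ (α : Ordinal) (T T' : Ordinal → Set Ordinal),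
      (∀ β < α, T β = T' β) → σ α T = σ α T') ∧
  ∀ T : Ordinal → Set Ordinal,
    (∀ α, 0 < α → α < ζ → (T 0 ∉ I ∧ T 0 ⊆ S) →
      (∀ β, 0 < β → β < α → T β ∉ I ∧ T β ⊆ σ β T) → InterBelow T α ∉ I →
      σ α T ∉ I ∧ ∀ β < α, σ α T ⊆ T β) ∧
    ((0 < ζ → T 0 ∉ I ∧ T 0 ⊆ S) → (∀ α, 0 < α → α < ζ → T α ∉ I ∧ T α ⊆ σ α T) →
      ∃ α < ζ, InterBelow T α ∈ I)

/-- Empty has a winning strategy in `BM'_{<ζ}(I,S)`. -/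
def EmptyWinsBMPrime (ζ : Ordinal) (I : Set (Set Ordinal)) (S : Set Ordinal) : Prop :=
  ∃ σ, EmptyBMPrimeStratWins ζ I S σ

/-- Nonempty has a winning strategy in `BM'_{<ζ}(I,S)`: a first move `T0` (an
`I`-positive subset of `S`, provided the game has any stage at all) together with
responses `τ α Sq` to empty's moves `Sq β` (`0 < β ≤ α`) at all later stages `α`. -/
def NonemptyWinsBMPrime (ζ : Ordinal) (I : Set (Set Ordinal)) (S : Set Ordinal) : Prop :=
  ∃ T0 : Set Ordinal, ∃ τ : Ordinal → (Ordinal → Set Ordinal) → Set Ordinal,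
    (0 < ζ → T0 ∉ I ∧ T0 ⊆ S) ∧
    (∀ (α : Ordinal) (Sq Sq' : Ordinal → Set Ordinal),
        (∀ β ≤ α, Sq β = Sq' β) → τ α Sq = τ α Sq') ∧
    ∀ Sq : Ordinal → Set Ordinal, ∀ α, 0 < α → α < ζ →
      ((∀ β, 0 < β → β ≤ α →
          Sq β ∉ I ∧ Sq β ⊆ T0 ∧ ∀ γ, 0 < γ → γ < β → Sq β ⊆ Sq γ ∩ τ γ Sq) →
        τ α Sq ∉ I ∧ τ α Sq ⊆ Sq α) ∧
      ((∀ β, 0 < β → β < α →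
          Sq β ∉ I ∧ Sq β ⊆ T0 ∧ ∀ γ, 0 < γ → γ < β → Sq β ⊆ Sq γ ∩ τ γ Sq) →
        (T0 ∩ ⋂ β ∈ Set.Ioo (0 : Ordinal) α, (Sq β ∩ τ β Sq)) ∉ I)

/-! ### The pressing down game `PD_{<ζ}(I,S)`.

At each stage `α < ζ` empty plays a regressive function `f_α : κ → κ` and nonempty plays
a set `T_α ⊆ S` contained in all previous `T_β` on which `f_α` is constant.  Empty wins a
run iff `T_α ∈ I` for some `α < ζ`. -/

/-- Empty has a winning strategy in `PD_{<ζ}(I,S)`: a (history-dependent) choice of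
regressive functions such that in every run in which nonempty plays legally, some move
of nonempty lies in `I`. -/
def EmptyWinsPD (ζ : Ordinal) (I : Set (Set Ordinal)) (S : Set Ordinal) : Prop :=
  ∃ σ : Ordinal → (Ordinal → Set Ordinal) → (Ordinal → Ordinal),
    (∀ (α : Ordinal) (T T' : Ordinal → Set Ordinal),
        (∀ β < α, T β = T' β) → σ α T = σ α T') ∧
    (∀ (α : Ordinal) (T : Ordinal → Set Ordinal) (β : Ordinal), 0 < β → σ α T β < β) ∧
    ∀ T : Ordinal → Set Ordinal,
      (∀ α, α < ζ →
        T α ⊆ S ∧ (∀ β < α, T α ⊆ T β) ∧ ∃ c, ∀ x ∈ T α, σ α T x = c) →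
      ∃ α, α < ζ ∧ T α ∈ I

/-- Nonempty has a winning strategy in `PD_{<ζ}(I,S)`: responses `τ α g` to the
sequence `g` of regressive functions played by empty, which are always legal
(homogeneous subsets of `S` and of all previous responses) and never lie in `I`. -/
def NonemptyWinsPD (ζ : Ordinal) (I : Set (Set Ordinal)) (S : Set Ordinal) : Prop :=
  ∃ τ : Ordinal → (Ordinal → (Ordinal → Ordinal)) → Set Ordinal,
    (∀ (α : Ordinal) (g g' : Ordinal → (Ordinal → Ordinal)),
        (∀ β ≤ α, g β = g' β) → τ α g = τ α g') ∧
    ∀ g : Ordinal → (Ordinal → Ordinal), (∀ α β, 0 < β → g α β < β) →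
      ∀ α, α < ζ →
        τ α g ⊆ S ∧ (∀ β < α, τ α g ⊆ τ β g) ∧ (∃ c, ∀ x ∈ τ α g, g α x = c) ∧
        τ α g ∉ I

/-! ### The games of length `ω + 1` on `κ`: `BM_{≤ω}(I,S)` and the ideal game.

In `BM_{≤ω}(I,S)` the players move at the finite stages `n < ω` and empty wins a run iff
`⋂_{n<ω} S_n ∈ I`; in the ideal game (played on `κ` itself) empty wins iff
`⋂_{n<ω} S_n = ∅`. -/

/-- `σ` is a winning strategy for empty in `BM_{≤ω}(I,S)`. -/
def EmptyBMOmegaStratWins (I : Set (Set Ordinal)) (S : Set Ordinal)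
    (σ : ℕ → (ℕ → Set Ordinal) → Set Ordinal) : Prop :=
  (∀ (n : ℕ) (T T' : ℕ → Set Ordinal), (∀ m < n, T m = T' m) → σ n T = σ n T') ∧
  ∀ T : ℕ → Set Ordinal,
    (∀ n, (∀ m < n, T m ∉ I ∧ T m ⊆ σ m T) →
      σ n T ∉ I ∧ σ n T ⊆ S ∧ ∀ m < n, σ n T ⊆ T m) ∧
    ((∀ n, T n ∉ I ∧ T n ⊆ σ n T) → (⋂ n, σ n T) ∈ I)

/-- Empty has a winning strategy in `BM_{≤ω}(I,S)`. -/
def EmptyWinsBMOmega (I : Set (Set Ordinal)) (S : Set Ordinal) : Prop :=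
  ∃ σ, EmptyBMOmegaStratWins I S σ

/-- Nonempty has a winning strategy in `BM_{≤ω}(I,S)`. -/
def NonemptyWinsBMOmega (I : Set (Set Ordinal)) (S : Set Ordinal) : Prop :=
  ∃ τ : ℕ → (ℕ → Set Ordinal) → Set Ordinal,
    (∀ (n : ℕ) (Sq Sq' : ℕ → Set Ordinal), (∀ m ≤ n, Sq m = Sq' m) → τ n Sq = τ n Sq') ∧
    ∀ Sq : ℕ → Set Ordinal,
      (∀ n, (∀ m ≤ n, Sq m ∉ I ∧ Sq m ⊆ S ∧ ∀ k < m, Sq m ⊆ Sq k ∩ τ k Sq) →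
        τ n Sq ∉ I ∧ τ n Sq ⊆ Sq n) ∧
      ((∀ n, Sq n ∉ I ∧ Sq n ⊆ S ∧ ∀ k < n, Sq n ⊆ Sq k ∩ τ k Sq) →
        (⋂ n, Sq n) ∉ I)

/-- Empty has a winning strategy in the ideal game on `I` (played on `κ`). -/
def EmptyWinsIdealGame (κ : Ordinal) (I : Set (Set Ordinal)) : Prop :=
  ∃ σ : ℕ → (ℕ → Set Ordinal) → Set Ordinal,
    (∀ (n : ℕ) (T T' : ℕ → Set Ordinal), (∀ m < n, T m = T' m) → σ n T = σ n T') ∧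
    ∀ T : ℕ → Set Ordinal,
      (∀ n, (∀ m < n, T m ∉ I ∧ T m ⊆ σ m T) →
        σ n T ∉ I ∧ σ n T ⊆ Set.Iio κ ∧ ∀ m < n, σ n T ⊆ T m) ∧
      ((∀ n, T n ∉ I ∧ T n ⊆ σ n T) → (⋂ n, σ n T) = ∅)

/-- Nonempty has a winning strategy in the ideal game on `I` (played on `κ`). -/
def NonemptyWinsIdealGame (κ : Ordinal) (I : Set (Set Ordinal)) : Prop :=
  ∃ τ : ℕ → (ℕ → Set Ordinal) → Set Ordinal,
    (∀ (n : ℕ) (Sq Sq' : ℕ → Set Ordinal), (∀ m ≤ n, Sq m = Sq' m) → τ n Sq = τ n Sq') ∧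
    ∀ Sq : ℕ → Set Ordinal,
      (∀ n, (∀ m ≤ n, Sq m ∉ I ∧ Sq m ⊆ Set.Iio κ ∧ ∀ k < m, Sq m ⊆ Sq k ∩ τ k Sq) →
        τ n Sq ∉ I ∧ τ n Sq ⊆ Sq n) ∧
      ((∀ n, Sq n ∉ I ∧ Sq n ⊆ Set.Iio κ ∧ ∀ k < n, Sq n ⊆ Sq k ∩ τ k Sq) →
        (⋂ n, Sq n).Nonempty)

/-!
Fix for every `α ∈ E^κ_ω` an `ω`-sequence `b α` converging to `α`, and split `E^κ_ω` into
disjoint `I`-positive sets `X₀`, `X₁`. Against a strategy `τ` of nonempty, empty plays two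
runs at once, starting with `X₀` and `X₁`. At stage `n` she shrinks nonempty's answer in
run `i` to a positive set on which `b · n` is a constant `γᵢ` (Fodor's lemma), and removes
all ordinals `≤ max γ₀ γ₁`. Since `τ` wins, some `sᵢ` survives in run `i`; then
`sᵢ = sup_n γᵢ(n)` and every `γᵢ(n) < s₁₋ᵢ`, so `s₀ = s₁ ∈ X₀ ∩ X₁`, a contradiction.
-/

section

variable {κ : Ordinal} {I : Set (Set Ordinal)}

namespace IsIdealOn

theorem mono (hI : IsIdealOn κ I) {A B : Set Ordinal} (h : A ⊆ B) (hB : B ∈ I) : A ∈ I :=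
  hI.2.2.1 A B h hB

theorem union_mem (hI : IsIdealOn κ I) {A B : Set Ordinal} (hA : A ∈ I) (hB : B ∈ I) :
    A ∪ B ∈ I :=
  hI.2.2.2.1 A hA B hB

theorem diff_notMem (hI : IsIdealOn κ I) {A B : Set Ordinal} (hA : A ∉ I) (hB : B ∈ I) :
    A \ B ∉ I :=
  fun h => hA (hI.mono (subset_sdiff_union A B) (hI.union_mem h hB))

theorem empty_mem (hI : IsIdealOn κ I) (hκ : 0 < κ) : ∅ ∈ I :=
  hI.mono (empty_subset _) (hI.2.1 0 hκ)

theorem mem_of_subsingleton (hI : IsIdealOn κ I) (hκ : 0 < κ) {A : Set Ordinal}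
    (hA : A.Subsingleton) (hAκ : A ⊆ Iio κ) : A ∈ I := by
  rcases hA.eq_empty_or_singleton with rfl | ⟨x, rfl⟩
  · exact hI.empty_mem hκ
  · exact hI.2.1 x (hAκ rfl)

end IsIdealOn

theorem IsFineIdeal.Iic_mem (hI : IsFineIdeal κ I) (hκ : Order.IsSuccLimit κ) {γ : Ordinal}
    (hγ : γ < κ) : Iic γ ∈ I :=
  hI _ (fun _ hx => lt_of_le_of_lt hx hγ)
    ⟨Order.succ γ, hκ.succ_lt hγ, fun _ hx => mem_Iio.2 (Order.lt_succ_of_le hx)⟩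

/-- Fodor's lemma for a normal ideal. -/
theorem IsNormalIdeal.exists_fiber_notMem (hN : IsNormalIdeal κ I) (hI : IsIdealOn κ I)
    {B : Set Ordinal} (hB : B ∉ I) (hBκ : B ⊆ Iio κ) {f : Ordinal → Ordinal}
    (hf : ∀ β ∈ B, f β < β) :
    ∃ γ < κ, B ∩ f ⁻¹' {γ} ∉ I := by
  by_contra! h
  exact hB (hI.mono (fun β hβ => show β ∈ {β | β < κ ∧ ∃ γ < β, β ∈ B ∩ f ⁻¹' {γ}} from
    ⟨hBκ hβ, f β, hf β hβ, hβ, rfl⟩) (hN _ h))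

theorem FineNormalIdeal.iUnion_mem (hI : FineNormalIdeal κ I) (hκ : Order.IsSuccLimit κ)
    (hω : Ordinal.omega0 < κ) {A : ℕ → Set Ordinal} (hA : ∀ n, A n ∈ I) : ⋃ n, A n ∈ I := by
  obtain ⟨hI, hF, hN⟩ := hI
  let B : Ordinal → Set Ordinal := fun γ => {x | ∃ n : ℕ, (n : Ordinal) = γ ∧ x ∈ A n}
  have hB : ∀ γ, γ < κ → B γ ∈ I := by
    intro γ _
    by_cases hγ : ∃ n : ℕ, (n : Ordinal) = γ
    · obtain ⟨n, rfl⟩ := hγ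
      refine hI.mono ?_ (hA n)
      rintro x ⟨m, hm, hx⟩
      rwa [← Nat.cast_inj.mp hm]
    · exact hI.mono (fun x ⟨n, hn, _⟩ => (hγ ⟨n, hn⟩).elim) (hI.empty_mem hκ.pos)
  refine hI.mono (fun x hx => ?_) (hI.union_mem (hN B hB) (hF.Iic_mem hκ hω))
  obtain ⟨n, hn⟩ := mem_iUnion.1 hx
  rcases lt_or_ge (n : Ordinal) x with hnx | hxn
  · exact Or.inl ⟨hI.1 _ (hA n) hn, n, hnx, n, rfl, hn⟩
  · exact Or.inr (hxn.trans (Ordinal.natCast_lt_omega0 n).le)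

theorem exists_seq_lt_iSup_eq_of_cof_eq_aleph0 {α : Ordinal} (hα : α.cof = Cardinal.aleph0) :
    ∃ b : ℕ → Ordinal, (∀ n, b n < α) ∧ ⨆ n, b n = α := by
  obtain ⟨f, hf⟩ := Ordinal.exists_isFundamentalSeq (hα ▸ Cardinal.ord_aleph0)
  have hsurj : Function.Surjective
      fun n : ℕ => (⟨n, Ordinal.natCast_lt_omega0 n⟩ : Iio Ordinal.omega0) :=
    fun ⟨o, ho⟩ => by
      obtain ⟨n, rfl⟩ := Ordinal.lt_omega0.1 ho
      exact ⟨n, rfl⟩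
  refine ⟨fun n => (f ⟨n, Ordinal.natCast_lt_omega0 n⟩).1, fun n => (f _).2, ?_⟩
  rw [hsurj.iSup_comp (fun i => (f i).1)]
  exact hf.iSup_eq Ordinal.one_lt_omega0

theorem RegUncountable.isSuccLimit (hκ : RegUncountable κ) :
    Order.IsSuccLimit κ :=
  hκ.2.2 ▸ Cardinal.isSuccLimit_ord hκ.2.1.le

theorem RegUncountable.omega0_lt (hκ : RegUncountable κ) :
    Ordinal.omega0 < κ :=
  hκ.2.2 ▸ Cardinal.ord_aleph0 ▸ Cardinal.ord_lt_ord.2 hκ.2.1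

/-- If `I` were prime on `E`, the levels of the `ω`-sequences chosen by Fodor's lemma would
be `I`-almost everywhere constant, and hence `I`-almost all of `E` would be a single sup. -/
theorem exists_disjoint_notMem_subsets (hI : FineNormalIdeal κ I) (hκ : Order.IsSuccLimit κ)
    (hω : Ordinal.omega0 < κ) {E : Set Ordinal} (hE : E ∉ I) (hEκ : E ⊆ Iio κ)
    {b : Ordinal → ℕ → Ordinal}
    (hb_lt : ∀ α ∈ E, ∀ n, b α n < α) (hb_sup : ∀ α ∈ E, ⨆ n, b α n = α) :
    ∃ X₀ ⊆ E, ∃ X₁ ⊆ E, X₀ ∉ I ∧ X₁ ∉ I ∧ Disjoint X₀ X₁ := by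
  by_contra! hsplit
  have hprime : ∀ Y ⊆ E, Y ∉ I → E \ Y ∈ I := fun Y hYE hY =>
    by_contra fun h => hsplit Y hYE (E \ Y) sdiff_subset hY h disjoint_sdiff_right
  choose g _ hg using fun n =>
    hI.2.2.exists_fiber_notMem hI.1 hE hEκ (f := (b · n)) fun α hα => hb_lt α hα n
  have hconst : {α ∈ E | ∀ n, b α n = g n}.Subsingleton := fun α hα β hβ => by
    rw [← hb_sup α hα.1, ← hb_sup β hβ.1, funext hα.2, funext hβ.2]
  refine hE (hI.1.mono (fun α hα => ?_) (hI.1.union_mem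
    (hI.iUnion_mem hκ hω fun n => hprime _ inter_subset_left (hg n))
    (hI.1.mem_of_subsingleton hκ.pos hconst fun α hα => hEκ hα.1)))
  by_cases h : ∀ n, b α n = g n
  · exact Or.inr ⟨hα, h⟩
  · obtain ⟨n, hn⟩ := not_forall.1 h
    exact Or.inl (mem_iUnion.2 ⟨n, hα, fun h' => hn h'.2⟩)

/-- Truncating the history passed to `F` makes the recursion well founded; for causal `F` it
changes nothing (`causalSeq_succ`). -/
def causalSeq {α β : Type*} (F : ℕ → (ℕ → α) → β) (a : α) (step : ℕ → β → α) : ℕ → α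
  | 0 => a
  | n + 1 => step n (F n fun m => if m ≤ n then causalSeq F a step m else a)

theorem causalSeq_zero {α β : Type*} (F : ℕ → (ℕ → α) → β) (a : α) (step : ℕ → β → α) :
    causalSeq F a step 0 = a := by
  rw [causalSeq]

theorem causalSeq_succ {α β : Type*} {F : ℕ → (ℕ → α) → β}
    (hF : ∀ n u v, (∀ m ≤ n, u m = v m) → F n u = F n v) (a : α) (step : ℕ → β → α) (n : ℕ) :
    causalSeq F a step (n + 1) = step n (F n (causalSeq F a step)) := by
  rw [causalSeq]
  congr 1
  exact hF n _ _ fun m hm => if_pos hm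

/-- The legality condition on empty's moves in `NonemptyWinsIdealGame`. -/
def IsLegalMove (κ : Ordinal) (I : Set (Set Ordinal))
    (τ : ℕ → (ℕ → Set Ordinal) → Set Ordinal) (Sq : ℕ → Set Ordinal) (m : ℕ) : Prop :=
  Sq m ∉ I ∧ Sq m ⊆ Iio κ ∧ ∀ k < m, Sq m ⊆ Sq k ∩ τ k Sq

theorem isLegalMove_of_step {τ : ℕ → (ℕ → Set Ordinal) → Set Ordinal} {Sq : ℕ → Set Ordinal}
    (hτ : ∀ n, (∀ m ≤ n, IsLegalMove κ I τ Sq m) → τ n Sq ∉ I ∧ τ n Sq ⊆ Sq n)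
    (h0 : Sq 0 ∉ I) (h0κ : Sq 0 ⊆ Iio κ)
    (hstep : ∀ n, τ n Sq ∉ I → τ n Sq ⊆ Sq 0 → Sq (n + 1) ∉ I ∧ Sq (n + 1) ⊆ τ n Sq)
    (n : ℕ) : IsLegalMove κ I τ Sq n := by
  induction n using Nat.strong_induction_on with
  | _ n ih =>
  rcases n with _ | n
  · exact ⟨h0, h0κ, fun k hk => absurd hk (Nat.not_lt_zero k)⟩
  obtain ⟨hT, hTS⟩ := hτ n fun m hm => ih m (Nat.lt_succ_of_le hm)
  have hS0 : Sq n ⊆ Sq 0 := by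
    rcases n with _ | n
    · rfl
    · exact fun x hx => ((ih _ (by omega)).2.2 0 (by omega) hx).1
  obtain ⟨hpos, hsub⟩ := hstep n hT (hTS.trans hS0)
  refine ⟨hpos, hsub.trans (hTS.trans (hS0.trans h0κ)), fun k hk => ?_⟩
  rcases Nat.lt_succ_iff_lt_or_eq.1 hk with hk | rfl
  · exact (hsub.trans hTS).trans ((ih n (Nat.lt_succ_self n)).2.2 k hk)
  · exact subset_inter (hsub.trans hTS) hsub

theorem exists_fiber_notMem_choice (hI : FineNormalIdeal κ I) (hκ : Order.IsSuccLimit κ)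
    {E : Set Ordinal} (hEκ : E ⊆ Iio κ) {b : Ordinal → ℕ → Ordinal}
    (hb_lt : ∀ α ∈ E, ∀ n, b α n < α) :
    ∃ γ : Set Ordinal → ℕ → Ordinal, (∀ T n, γ T n < κ) ∧
      ∀ T n, T ∉ I → T ⊆ E → T ∩ (b · n) ⁻¹' {γ T n} ∉ I := by
  have hlevel : ∀ (T : Set Ordinal) (n : ℕ),
      ∃ γ < κ, T ∉ I → T ⊆ E → T ∩ (b · n) ⁻¹' {γ} ∉ I := by
    intro T n
    by_cases hT : T ∉ I ∧ T ⊆ E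
    · obtain ⟨γ, hγκ, hγ⟩ := hI.2.2.exists_fiber_notMem hI.1 hT.1 (hT.2.trans hEκ)
        fun α hα => hb_lt α (hT.2 hα) n
      exact ⟨γ, hγκ, fun _ _ => hγ⟩
    · exact ⟨0, hκ.pos, fun h h' => absurd ⟨h, h'⟩ hT⟩
  choose γ hγκ hγ using hlevel
  exact ⟨γ, hγκ, hγ⟩

theorem exists_pressing_down_runs (hI : FineNormalIdeal κ I) (hκ : Order.IsSuccLimit κ)
    {τ : ℕ → (ℕ → Set Ordinal) → Set Ordinal}
    (hcausal : ∀ n Sq Sq', (∀ m ≤ n, Sq m = Sq' m) → τ n Sq = τ n Sq')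
    (hτ : ∀ Sq n, (∀ m ≤ n, IsLegalMove κ I τ Sq m) → τ n Sq ∉ I ∧ τ n Sq ⊆ Sq n)
    {E : Set Ordinal} (hEκ : E ⊆ Iio κ) {b : Ordinal → ℕ → Ordinal}
    (hb_lt : ∀ α ∈ E, ∀ n, b α n < α) {X : Bool → Set Ordinal} (hXE : ∀ i, X i ⊆ E)
    (hX : ∀ i, X i ∉ I) :
    ∃ S : Bool → ℕ → Set Ordinal, (∀ i, S i 0 = X i) ∧ (∀ i n, IsLegalMove κ I τ (S i) n) ∧
      ∀ n i j, ∀ s ∈ S i (n + 1), ∀ t ∈ S j (n + 1), b s n < t := by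
  obtain ⟨γ, hγκ, hγ⟩ := exists_fiber_notMem_choice hI hκ hEκ hb_lt
  let cut (n : ℕ) (T : Bool → Set Ordinal) : Ordinal := max (γ (T false) n) (γ (T true) n)
  have hγ_le_cut : ∀ n T i, γ (T i) n ≤ cut n T := by
    intro n T i
    cases i
    exacts [le_max_left _ _, le_max_right _ _]
  let F : ℕ → (ℕ → Bool → Set Ordinal) → Bool → Set Ordinal := fun n u i => τ n fun m => u m i
  let step (n : ℕ) (T : Bool → Set Ordinal) : Bool → Set Ordinal :=
    fun i => (T i ∩ (b · n) ⁻¹' {γ (T i) n}) \ Iic (cut n T)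
  have hu := causalSeq_succ (F := F)
    (fun n u v huv => funext fun i => hcausal n _ _ fun m hm => by rw [huv m hm]) X step
  let u := causalSeq F X step
  let S : Bool → ℕ → Set Ordinal := fun i m => u m i
  have hS : ∀ i n, S i (n + 1) =
      (τ n (S i) ∩ (b · n) ⁻¹' {γ (τ n (S i)) n}) \ Iic (cut n fun j => τ n (S j)) :=
    fun i n => congrFun (hu n) i
  have hS0 : ∀ i, S i 0 = X i := fun i => congrFun (causalSeq_zero F X step) i
  refine ⟨S, hS0, fun i => isLegalMove_of_step (hτ (S i)) (hS0 i ▸ hX i)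
    (hS0 i ▸ (hXE i).trans hEκ) fun n hT hTS => ?_, fun n i j s hs t ht => ?_⟩
  · rw [hS]
    refine ⟨hI.1.diff_notMem (hγ _ n hT (hTS.trans (hS0 i ▸ hXE i))) (hI.2.1.Iic_mem hκ ?_),
      fun x hx => hx.1.1⟩
    exact max_lt (hγκ _ n) (hγκ _ n)
  · rw [hS] at hs ht
    rw [show b s n = _ from hs.1.2]
    exact (hγ_le_cut n (fun j => τ n (S j)) i).trans_lt (not_le.1 ht.2)

end

/-- If `E^κ_ω ∉ I`, then nonempty has no winning strategy in the ideal
game on `I`. -/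
theorem statement14 (κ : Ordinal) (I : Set (Set Ordinal))
    (hκ : RegUncountable κ) (hI : FineNormalIdeal κ I)
    (hE : Ecofomega κ ∉ I) :
    ¬ NonemptyWinsIdealGame κ I := by
  rintro ⟨τ, hcausal, hτ⟩
  have hEκ : Ecofomega κ ⊆ Iio κ := fun α hα => hα.1
  choose! b hb_lt hb_sup using fun α (hα : α ∈ Ecofomega κ) =>
    exists_seq_lt_iSup_eq_of_cof_eq_aleph0 hα.2
  obtain ⟨X₀, hX₀E, X₁, hX₁E, hX₀, hX₁, hdisj⟩ :=
    exists_disjoint_notMem_subsets hI hκ.isSuccLimit hκ.omega0_lt hE hEκ hb_lt hb_sup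
  let X : Bool → Set Ordinal := fun i => bif i then X₁ else X₀
  have hXE : ∀ i, X i ⊆ Ecofomega κ := Bool.forall_bool.2 ⟨hX₀E, hX₁E⟩
  obtain ⟨S, hS0, hlegal, hpress⟩ := exists_pressing_down_runs hI hκ.isSuccLimit hcausal
    (fun Sq => (hτ Sq).1) hEκ hb_lt hXE (Bool.forall_bool.2 ⟨hX₀, hX₁⟩)
  choose s hs using fun i => (hτ (S i)).2 (hlegal i)
  have hs_mem : ∀ i n, s i ∈ S i n := fun i => mem_iInter.1 (hs i)
  have hsX : ∀ i, s i ∈ X i := fun i => hS0 i ▸ hs_mem i 0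
  have hle : ∀ i j, s i ≤ s j := fun i j =>
    hb_sup (s i) (hXE i (hsX i)) ▸
      ciSup_le fun n => (hpress n i j _ (hs_mem i (n + 1)) _ (hs_mem j (n + 1))).le
  exact hdisj.ne_of_mem (hsX false) (hsX true) ((hle _ _).antisymm (hle _ _))

end BMPDGames
end
end

section
/- Let I be a fine normal ideal on κ such that E^κ_ω ∉ I. Then empty has a winning strategy in the Banach–Mazur game BM_{≤ω}(I,κ) (for instance, a strategy whose first move is E^κ_ω). -/
open Set

noncomputable section

namespace BMPDGames

/-! Empty opens with `E^κ_ω` and fixes, for each `x` of countable cofinality, an ω-sequence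
`cofSeq x` below `x` whose supremum is `x`. At stage `n + 1` the map `x ↦ cofSeq x n` is
regressive on nonempty's last move, so by normality empty can shrink that move to a positive
set on which it is constant. After ω stages every term of `cofSeq x` is fixed for all `x` in
the intersection, and since `cofSeq x` determines `x`, the intersection has at most one
element, hence lies in `I`. -/

open Ordinal Cardinal

theorem exists_nat_seq_lt_iSup_add_one_eq {x : Ordinal} (hx : x.cof = ℵ₀) :
    ∃ f : ℕ → Ordinal, (∀ n, f n < x) ∧ ⨆ n, f n + 1 = x := by
  obtain ⟨f, hf⟩ := exists_isFundamentalSeq (by rw [hx, ord_aleph0])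
  refine ⟨fun n ↦ (f ⟨n, natCast_lt_omega0 n⟩).1, fun n ↦ (f _).2, ?_⟩
  refine (iSup_add_one_le fun n ↦ (f _).2).antisymm ?_
  conv_lhs => rw [← hf.iSup_add_one_eq]
  refine Ordinal.iSup_le fun ⟨i, hi⟩ ↦ ?_
  obtain ⟨n, rfl⟩ := lt_omega0.1 hi
  exact Ordinal.le_iSup (fun n : ℕ ↦ (f ⟨n, natCast_lt_omega0 n⟩).1 + 1) n

def cofSeq (x : Ordinal) : ℕ → Ordinal :=
  Classical.epsilon fun f ↦ (∀ n, f n < x) ∧ ⨆ n, f n + 1 = x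

theorem cofSeq_spec {x : Ordinal} (hx : x.cof = ℵ₀) :
    (∀ n, cofSeq x n < x) ∧ ⨆ n, cofSeq x n + 1 = x :=
  Classical.epsilon_spec (exists_nat_seq_lt_iSup_add_one_eq hx)

theorem cofSeq_lt {x : Ordinal} (hx : x.cof = ℵ₀) (n : ℕ) : cofSeq x n < x :=
  (cofSeq_spec hx).1 n

theorem cofSeq_injOn : InjOn cofSeq {x : Ordinal | x.cof = ℵ₀} := fun x hx y hy hxy ↦ by
  rw [← (cofSeq_spec hx).2, ← (cofSeq_spec hy).2, hxy]

section Ideal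

variable {κ : Ordinal} {I : Set (Set Ordinal)}

theorem IsNormalIdeal.empty_mem (hI : IsIdealOn κ I) (hN : IsNormalIdeal κ I) : ∅ ∈ I := by
  convert hN (fun γ ↦ {γ}) hI.2.1
  ext β
  simp

theorem IsIdealOn.mem_of_subsingleton_s19 (hI : IsIdealOn κ I) (h0 : ∅ ∈ I) {A : Set Ordinal}
    (hA : A ⊆ Iio κ) (hs : A.Subsingleton) : A ∈ I := by
  obtain rfl | ⟨x, rfl⟩ := hs.eq_empty_or_singleton
  · exact h0
  · exact hI.2.1 x (hA rfl)

theorem exists_positive_const_of_regressive (hI : IsIdealOn κ I) (hN : IsNormalIdeal κ I)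
    {S : Set Ordinal} (hS : S ∉ I) (hSκ : S ⊆ Iio κ) {f : Ordinal → Ordinal}
    (hf : ∀ x ∈ S, f x < x) : ∃ B ⊆ S, B ∉ I ∧ ∃ c, ∀ x ∈ B, f x = c := by
  by_contra! h
  have hfiber : ∀ γ < κ, S ∩ f ⁻¹' {γ} ∈ I := fun γ _ ↦ by
    by_contra hγ
    obtain ⟨x, hx, hfx⟩ := h _ inter_subset_left hγ γ
    exact hfx hx.2
  refine hS (hI.2.2.1 _ _ (fun x hx ↦ ?_) (hN _ hfiber))
  exact ⟨hSκ hx, f x, hf x hx, hx, rfl⟩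

end Ideal

open Classical in
def homogeneousPart (I : Set (Set Ordinal)) (f : Ordinal → Ordinal) (A : Set Ordinal) :
    Set Ordinal :=
  if h : ∃ B ⊆ A, B ∉ I ∧ ∃ c, ∀ x ∈ B, f x = c then h.choose else A

theorem homogeneousPart_subset (I : Set (Set Ordinal)) (f : Ordinal → Ordinal)
    (A : Set Ordinal) : homogeneousPart I f A ⊆ A := by
  unfold homogeneousPart
  split_ifs with h
  exacts [h.choose_spec.1, subset_rfl]

theorem homogeneousPart_spec {I : Set (Set Ordinal)} {f : Ordinal → Ordinal} {A : Set Ordinal}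
    (h : ∃ B ⊆ A, B ∉ I ∧ ∃ c, ∀ x ∈ B, f x = c) :
    homogeneousPart I f A ∉ I ∧ ∃ c, ∀ x ∈ homogeneousPart I f A, f x = c := by
  rw [homogeneousPart, dif_pos h]
  exact h.choose_spec.2

def cofSeqStrategy (κ : Ordinal) (I : Set (Set Ordinal)) : ℕ → (ℕ → Set Ordinal) → Set Ordinal
  | 0, _ => Ecofomega κ
  | n + 1, T => homogeneousPart I (fun x ↦ cofSeq x n) (T n)

namespace cofSeqStrategy

variable {κ : Ordinal} {I : Set (Set Ordinal)} {T : ℕ → Set Ordinal}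

theorem subset_of_lt {n : ℕ} (hT : ∀ m < n, T m ⊆ cofSeqStrategy κ I m T) :
    ∀ m < n, cofSeqStrategy κ I n T ⊆ T m := by
  induction n with
  | zero => simp
  | succ k ih =>
    intro m hm
    have hk : cofSeqStrategy κ I (k + 1) T ⊆ T k := homogeneousPart_subset ..
    obtain hm | rfl := Nat.lt_succ_iff_lt_or_eq.mp hm
    · exact hk.trans <| (hT k k.lt_succ_self).trans <|
        ih (fun m hm' ↦ hT m (hm'.trans k.lt_succ_self)) m hm
    · exact hk

theorem subset_ecofomega {n : ℕ} (hT : ∀ m < n, T m ⊆ cofSeqStrategy κ I m T) :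
    cofSeqStrategy κ I n T ⊆ Ecofomega κ := by
  cases n with
  | zero => exact subset_rfl
  | succ k => exact (subset_of_lt hT 0 k.succ_pos).trans (hT 0 k.succ_pos)

theorem succ_spec (hI : IsIdealOn κ I) (hN : IsNormalIdeal κ I) {n : ℕ}
    (hT : ∀ m < n + 1, T m ∉ I ∧ T m ⊆ cofSeqStrategy κ I m T) :
    cofSeqStrategy κ I (n + 1) T ∉ I ∧
      ∃ c, ∀ x ∈ cofSeqStrategy κ I (n + 1) T, cofSeq x n = c := by
  have hTn := hT n n.lt_succ_self
  have hE : T n ⊆ Ecofomega κ :=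
    hTn.2.trans (subset_ecofomega fun m hm ↦ (hT m (hm.trans n.lt_succ_self)).2)
  exact homogeneousPart_spec <| exists_positive_const_of_regressive hI hN hTn.1
    (fun x hx ↦ (hE hx).1) fun x hx ↦ cofSeq_lt (hE hx).2 n

theorem wins (hI : IsIdealOn κ I) (hN : IsNormalIdeal κ I) (hE : Ecofomega κ ∉ I) :
    EmptyBMOmegaStratWins I (Iio κ) (cofSeqStrategy κ I) := by
  refine ⟨fun n T T' h ↦ ?_, fun T ↦ ⟨fun n hT ↦ ?_, fun hT ↦ ?_⟩⟩
  · cases n with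
    | zero => rfl
    | succ k => simp only [cofSeqStrategy, h k k.lt_succ_self]
  · have hsub : ∀ m < n, T m ⊆ cofSeqStrategy κ I m T := fun m hm ↦ (hT m hm).2
    refine ⟨?_, fun x hx ↦ (subset_ecofomega hsub hx).1, subset_of_lt hsub⟩
    cases n with
    | zero => exact hE
    | succ k => exact (succ_spec hI hN hT).1
  · have hconst n := (succ_spec hI hN (T := T) (n := n) fun m _ ↦ hT m).2
    choose c hc using hconst
    have hE0 : (⋂ n, cofSeqStrategy κ I n T) ⊆ Ecofomega κ := iInter_subset _ 0
    refine hI.mem_of_subsingleton_s19 (hN.empty_mem hI) (fun x hx ↦ (hE0 hx).1) fun x hx y hy ↦ ?_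
    refine cofSeq_injOn (hE0 hx).2 (hE0 hy).2 (funext fun n ↦ ?_)
    rw [hc n x (mem_iInter.1 hx _), hc n y (mem_iInter.1 hy _)]

end cofSeqStrategy

theorem statement19_general (κ : Ordinal) (I : Set (Set Ordinal))
    (hI : FineNormalIdeal κ I)
    (hE : Ecofomega κ ∉ I) :
    EmptyWinsBMOmega I (Set.Iio κ) ∧
    ∃ σ, EmptyBMOmegaStratWins I (Set.Iio κ) σ ∧
      ∀ T : ℕ → Set Ordinal, σ 0 T = Ecofomega κ := by
  have h := cofSeqStrategy.wins hI.1 hI.2.2 hE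
  exact ⟨⟨_, h⟩, _, h, fun _ ↦ rfl⟩

/-- If `E^κ_ω ∉ I`, then empty has a winning strategy in `BM_{≤ω}(I,κ)`;
for instance, one whose first move is `E^κ_ω`. -/
theorem statement19 (κ : Ordinal) (I : Set (Set Ordinal))
    (hκ : RegUncountable κ) (hI : FineNormalIdeal κ I)
    (hE : Ecofomega κ ∉ I) :
    EmptyWinsBMOmega I (Set.Iio κ) ∧
    ∃ σ, EmptyBMOmegaStratWins I (Set.Iio κ) σ ∧
      ∀ T : ℕ → Set Ordinal, σ 0 T = Ecofomega κ :=
  statement19_general κ I hI hE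

end BMPDGames
end
end
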